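/- Let A ∈ ℝ^{m×m} be symmetric with rank(A) ≤ r_A and ‖A‖ ≤ 1, and suppose 𝓜 is (r+r_A+1, δ)-RIP with δ ∈ [0,1). Let X ∈ St(m,r) and let Θ ∈ ℝ^{r×r} be symmetric with ‖Θ‖ ≤ 2. Define the Euclidean gradients ∇_X f_∞ = (XΘXᵀ − A)XΘ, ∇_Θ f_∞ = (1/2)Xᵀ(XΘXᵀ − A)X, ∇_X f = [𝓜*𝓜(XΘXᵀ − A)]XΘ, ∇_Θ f = (1/2)Xᵀ[𝓜*𝓜(XΘXᵀ − A)]X, and for a matrix-valued gradient g at X the Riemannian gradient ∇ᴿ(g) = (I_m − XXᵀ)g + (X/2)(Xᵀg − gᵀX). Then ‖∇ᴿ(∇_X f_∞) − ∇ᴿ(∇_X f)‖_F ≤ 12mδ and ‖∇_Θ f_∞ − ∇_Θ f‖_F ≤ (3/2)mδ. -/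

import Mathlib

open Matrix MeasureTheory ProbabilityTheory BigOperators

noncomputable section

/-- Frobenius norm of a real matrix. -/
def frob {m n : ℕ} (M : Matrix (Fin m) (Fin n) ℝ) : ℝ :=
  Real.sqrt (∑ i, ∑ j, (M i j) ^ 2)

/-- Euclidean norm of a vector in `ℝⁿ`. -/
def vnorm {n : ℕ} (v : Fin n → ℝ) : ℝ :=
  Real.sqrt (∑ i, (v i) ^ 2)

/-- Spectral norm (operator 2-norm) of a real matrix. -/
def spec {m n : ℕ} (M : Matrix (Fin m) (Fin n) ℝ) : ℝ :=
  ‖LinearMap.toContinuousLinearMap (Matrix.toEuclideanLin M)‖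

theorem isHermitian_tmul {m n : ℕ} (M : Matrix (Fin m) (Fin n) ℝ) :
    (Mᵀ * M).IsHermitian := by
  simpa [Matrix.conjTranspose_eq_transpose_of_trivial] using
    Matrix.isHermitian_conjTranspose_mul_self M

theorem posSemidef_tmul {m n : ℕ} (M : Matrix (Fin m) (Fin n) ℝ) :
    (Mᵀ * M).PosSemidef := by
  simpa [Matrix.conjTranspose_eq_transpose_of_trivial] using
    Matrix.posSemidef_conjTranspose_mul_self M

/-- The `i`-th largest singular value (1-indexed) of a real matrix, i.e. the square root of the
`i`-th largest eigenvalue of `MᵀM`; junk value `0` when `i` is out of range. -/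
def svalue {m n : ℕ} (M : Matrix (Fin m) (Fin n) ℝ) (i : ℕ) : ℝ :=
  if h : 1 ≤ i ∧ i ≤ n then
    Real.sqrt ((isHermitian_tmul M).eigenvalues
      (Tuple.sort (isHermitian_tmul M).eigenvalues ⟨n - i, by omega⟩))
  else 0

/-- Membership in the Stiefel manifold `St(m,r)`. -/
def Stiefel {m r : ℕ} (X : Matrix (Fin m) (Fin r) ℝ) : Prop :=
  Xᵀ * X = 1

/-- The Loewner order on (symmetric) real matrices: `A ⪯ B`. -/
def loewnerLE {m : ℕ} (A B : Matrix (Fin m) (Fin m) ℝ) : Prop :=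
  (B - A).PosSemidef

/-- The positive semidefinite square root of a PSD matrix, as `Matrix.PosSemidef.sqrt` was
defined in older Mathlib. -/
def psdSqrt {r : ℕ} {S : Matrix (Fin r) (Fin r) ℝ} (h : S.PosSemidef) : Matrix (Fin r) (Fin r) ℝ :=
  h.1.eigenvectorUnitary.1 * diagonal ((↑) ∘ (Real.sqrt ∘ h.1.eigenvalues)) *
    (star h.1.eigenvectorUnitary : Matrix (Fin r) (Fin r) ℝ)

/-- The inverse of the positive semidefinite square root of a matrix (junk value `0` when the
matrix is not positive semidefinite). -/
def sqrtInv {r : ℕ} (S : Matrix (Fin r) (Fin r) ℝ) : Matrix (Fin r) (Fin r) ℝ :=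
  haveI := Classical.propDecidable S.PosSemidef
  if h : S.PosSemidef then (psdSqrt h)⁻¹ else 0

/-- The linear sensing map `𝓜` determined by feature matrices `M_i`:
`𝓜(B)_i = Tr(M_iᵀ B)`. -/
def calM {m n : ℕ} (Ms : Fin n → Matrix (Fin m) (Fin m) ℝ)
    (B : Matrix (Fin m) (Fin m) ℝ) : Fin n → ℝ :=
  fun i => ((Ms i)ᵀ * B).trace

/-- The adjoint `𝓜*` of the sensing map: `𝓜*(y) = ∑ i, y_i M_i`. -/
def calMadj {m n : ℕ} (Ms : Fin n → Matrix (Fin m) (Fin m) ℝ)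
    (y : Fin n → ℝ) : Matrix (Fin m) (Fin m) ℝ :=
  ∑ i, y i • Ms i

/-- `(𝓜*𝓜 − 𝓘)(B)`. -/
def calE {m n : ℕ} (Ms : Fin n → Matrix (Fin m) (Fin m) ℝ)
    (B : Matrix (Fin m) (Fin m) ℝ) : Matrix (Fin m) (Fin m) ℝ :=
  calMadj Ms (calM Ms B) - B

/-- The `(s, δ)`-restricted isometry property for the sensing map determined by `Ms`. -/
def IsRIP {m n : ℕ} (Ms : Fin n → Matrix (Fin m) (Fin m) ℝ) (s : ℕ) (δ : ℝ) : Prop :=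
  ∀ B : Matrix (Fin m) (Fin m) ℝ, B.IsSymm → B.rank ≤ s →
    (1 - δ) * frob B ^ 2 ≤ vnorm (calM Ms B) ^ 2 ∧
      vnorm (calM Ms B) ^ 2 ≤ (1 + δ) * frob B ^ 2

/-- The Riemannian gradient on the Stiefel manifold obtained from the Euclidean gradient `g`
at the point `X`. -/
def Rgrad {m r : ℕ} (X g : Matrix (Fin m) (Fin r) ℝ) : Matrix (Fin m) (Fin r) ℝ :=
  (1 - X * Xᵀ) * g + (2⁻¹ : ℝ) • (X * (Xᵀ * g - gᵀ * X))

/-- One step of Riemannian gradient descent (with `μ = 2`) for the weight-normalized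
matrix sensing problem. -/
def RGDstep {m r n : ℕ} (Ms : Fin n → Matrix (Fin m) (Fin m) ℝ)
    (A : Matrix (Fin m) (Fin m) ℝ) (η : ℝ)
    (p : Matrix (Fin m) (Fin r) ℝ × Matrix (Fin r) (Fin r) ℝ) :
    Matrix (Fin m) (Fin r) ℝ × Matrix (Fin r) (Fin r) ℝ :=
  let X := p.1
  let Θ := p.2
  let Gt := calMadj Ms (calM Ms (X * Θ * Xᵀ - A)) * X * Θ
  let G := Rgrad X Gt
  let X' := (X - η • G) * sqrtInv (1 + η ^ 2 • (Gᵀ * G))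
  let Θ' := X'ᵀ * A * X' - X'ᵀ * calE Ms (X' * Θ * X'ᵀ - A) * X'
  (X', Θ')

/-- The standard Gaussian ensemble on `m × r` real matrices (i.i.d. `N(0,1)` entries). -/
def gaussianEnsemble (m r : ℕ) : Measure (Fin m → Fin r → ℝ) :=
  Measure.pi fun _ : Fin m => Measure.pi fun _ : Fin r => gaussianReal 0 1

end

/-! The two differences are linear in the error `E = (𝓜*𝓜 - 𝓘)(D)` of the residual
`D = XΘXᵀ - A`, a symmetric matrix of rank at most `r + r_A`. Polarizing the RIP inequalities
against a rank-one test matrix `c vvᵀ` bounds the quadratic form of `E`, hence (by the Rayleigh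
quotient characterisation) its spectral norm, by `δ‖D‖_F`; therefore
`‖E‖_F ≤ √m ‖E‖ ≤ δ m ‖D‖ ≤ 3mδ`. Since `X` has orthonormal columns, `X`, `Xᵀ` and `I - XXᵀ`
are contractions, so the Riemannian gradient at most doubles Frobenius norms; with `‖Θ‖ ≤ 2`
this gives `12mδ` and `(3/2)mδ`. -/

namespace Matrix

variable {m n K : Type*} [Fintype n] [Field K]

theorem rank_add_le (A B : Matrix m n K) : (A + B).rank ≤ A.rank + B.rank := by
  refine (Submodule.finrank_mono ?_).trans (Submodule.finrank_add_le_finrank_add_finrank _ _)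
  rintro _ ⟨v, rfl⟩
  rw [mulVecLin_apply, add_mulVec]
  exact Submodule.add_mem_sup (LinearMap.mem_range_self _ v) (LinearMap.mem_range_self _ v)

theorem rank_neg (A : Matrix m n K) : (-A).rank = A.rank := by
  rw [← neg_one_smul K A, rank_smul_of_mem_nonZeroDivisors _
    (mem_nonZeroDivisors_of_ne_zero (neg_ne_zero.mpr one_ne_zero))]

theorem rank_sub_le (A B : Matrix m n K) : (A - B).rank ≤ A.rank + B.rank := by
  simpa [sub_eq_add_neg, rank_neg] using rank_add_le A (-B)

end Matrix

section Frobenius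

attribute [local instance] Matrix.frobeniusNormedAddCommGroup Matrix.frobeniusNormedSpace

variable {m n : ℕ}

theorem frob_eq_norm (M : Matrix (Fin m) (Fin n) ℝ) : frob M = ‖M‖ := by
  simp [frob, Matrix.frobenius_norm_def, Real.sqrt_eq_rpow]

theorem frob_nonneg (M : Matrix (Fin m) (Fin n) ℝ) : 0 ≤ frob M := Real.sqrt_nonneg _

theorem frob_eq_zero {M : Matrix (Fin m) (Fin n) ℝ} : frob M = 0 ↔ M = 0 := by
  rw [frob_eq_norm, norm_eq_zero]

theorem frob_add_le (A B : Matrix (Fin m) (Fin n) ℝ) : frob (A + B) ≤ frob A + frob B := by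
  simpa only [frob_eq_norm] using norm_add_le A B

theorem frob_sub_le (A B : Matrix (Fin m) (Fin n) ℝ) : frob (A - B) ≤ frob A + frob B := by
  simpa only [frob_eq_norm] using norm_sub_le A B

theorem frob_neg (A : Matrix (Fin m) (Fin n) ℝ) : frob (-A) = frob A := by
  simp only [frob_eq_norm, norm_neg]

theorem frob_smul (c : ℝ) (A : Matrix (Fin m) (Fin n) ℝ) : frob (c • A) = |c| * frob A := by
  simp only [frob_eq_norm, norm_smul, Real.norm_eq_abs]

theorem frob_transpose (A : Matrix (Fin m) (Fin n) ℝ) : frob Aᵀ = frob A := by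
  simp only [frob_eq_norm, Matrix.frobenius_norm_transpose]

theorem frob_sq (A : Matrix (Fin m) (Fin n) ℝ) : frob A ^ 2 = ∑ i, ∑ j, A i j ^ 2 :=
  Real.sq_sqrt (by positivity)

theorem frob_sq_eq_trace (A : Matrix (Fin m) (Fin n) ℝ) : frob A ^ 2 = (Aᵀ * A).trace := by
  rw [frob_sq, Finset.sum_comm]
  simp [Matrix.trace, Matrix.mul_apply, sq]

theorem frob_one : frob (1 : Matrix (Fin n) (Fin n) ℝ) = √n := by
  simp [frob, Matrix.one_apply]

end Frobenius

section L2Operator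

open scoped Matrix.Norms.L2Operator

variable {m n k : ℕ}

theorem spec_eq_norm (M : Matrix (Fin m) (Fin n) ℝ) : spec M = ‖M‖ := rfl

theorem spec_nonneg (M : Matrix (Fin m) (Fin n) ℝ) : 0 ≤ spec M := norm_nonneg _

theorem spec_sub_le (A B : Matrix (Fin m) (Fin n) ℝ) : spec (A - B) ≤ spec A + spec B :=
  norm_sub_le A B

theorem spec_mul_le (A : Matrix (Fin m) (Fin n) ℝ) (B : Matrix (Fin n) (Fin k) ℝ) :
    spec (A * B) ≤ spec A * spec B :=
  Matrix.l2_opNorm_mul A B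

theorem spec_transpose (A : Matrix (Fin m) (Fin n) ℝ) : spec Aᵀ = spec A :=
  Matrix.l2_opNorm_conjTranspose A

theorem spec_transpose_mul_self (A : Matrix (Fin m) (Fin n) ℝ) :
    spec (Aᵀ * A) = spec A ^ 2 :=
  (Matrix.l2_opNorm_conjTranspose_mul_self A).trans (sq _).symm

theorem spec_le_one_of_transpose_mul_self {P : Matrix (Fin n) (Fin n) ℝ} (hP : Pᵀ * P = P) :
    spec P ≤ 1 := by
  have h := spec_transpose_mul_self P
  rw [hP] at h
  nlinarith [spec_nonneg P]

theorem Stiefel.spec_le_one {X : Matrix (Fin m) (Fin n) ℝ} (hX : Stiefel X) : spec X ≤ 1 := by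
  have h := spec_transpose_mul_self X
  rw [show Xᵀ * X = 1 from hX] at h
  have h1 : spec (1 : Matrix (Fin n) (Fin n) ℝ) ≤ 1 :=
    spec_le_one_of_transpose_mul_self (by simp)
  nlinarith [spec_nonneg X]

theorem Stiefel.spec_transpose_le_one {X : Matrix (Fin m) (Fin n) ℝ} (hX : Stiefel X) :
    spec Xᵀ ≤ 1 :=
  (spec_transpose X).trans_le hX.spec_le_one

theorem Stiefel.spec_one_sub_mul_transpose_le_one {X : Matrix (Fin m) (Fin n) ℝ}
    (hX : Stiefel X) : spec (1 - X * Xᵀ) ≤ 1 := by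
  refine spec_le_one_of_transpose_mul_self ?_
  have hX : Xᵀ * X = 1 := hX
  simp only [Matrix.transpose_sub, Matrix.transpose_one, Matrix.transpose_mul,
    Matrix.transpose_transpose, Matrix.sub_mul, Matrix.mul_sub, Matrix.one_mul, Matrix.mul_one]
  rw [Matrix.mul_assoc, ← Matrix.mul_assoc Xᵀ, hX, Matrix.one_mul]
  abel

theorem frob_mul_le_spec_mul (A : Matrix (Fin m) (Fin n) ℝ) (B : Matrix (Fin n) (Fin k) ℝ) :
    frob (A * B) ≤ spec A * frob B := by
  have hcol (j : Fin k) :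
      ∑ i, (A * B) i j ^ 2 ≤ spec A ^ 2 * ∑ i, B i j ^ 2 := by
    have h := pow_le_pow_left₀ (norm_nonneg _)
      (Matrix.l2_opNorm_mulVec A (WithLp.toLp 2 fun i => B i j)) 2
    rw [mul_pow, EuclideanSpace.norm_sq_eq, EuclideanSpace.norm_sq_eq] at h
    simpa [Matrix.mul_apply, Matrix.mulVec, dotProduct, spec_eq_norm] using h
  have hsq : frob (A * B) ^ 2 ≤ (spec A * frob B) ^ 2 :=
    calc frob (A * B) ^ 2 = ∑ j, ∑ i, (A * B) i j ^ 2 := by rw [frob_sq, Finset.sum_comm]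
      _ ≤ ∑ j, spec A ^ 2 * ∑ i, B i j ^ 2 := Finset.sum_le_sum fun j _ => hcol j
      _ = (spec A * frob B) ^ 2 := by rw [mul_pow, frob_sq, Finset.sum_comm, Finset.mul_sum]
  exact (pow_le_pow_iff_left₀ (frob_nonneg _)
    (mul_nonneg (spec_nonneg A) (frob_nonneg B)) two_ne_zero).mp hsq

theorem frob_mul_le_mul_spec (A : Matrix (Fin m) (Fin n) ℝ) (B : Matrix (Fin n) (Fin k) ℝ) :
    frob (A * B) ≤ frob A * spec B := by
  rw [← frob_transpose, Matrix.transpose_mul, ← frob_transpose A, ← spec_transpose B, mul_comm]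
  exact frob_mul_le_spec_mul _ _

theorem frob_le_spec_mul_sqrt (A : Matrix (Fin m) (Fin n) ℝ) : frob A ≤ spec A * √n := by
  have h := frob_mul_le_spec_mul A (1 : Matrix (Fin n) (Fin n) ℝ)
  rwa [Matrix.mul_one, frob_one] at h

theorem spec_le_of_abs_dotProduct_mulVec_le {E : Matrix (Fin m) (Fin m) ℝ}
    (hE : E.IsSymm) {c : ℝ} (hc : 0 ≤ c) (h : ∀ v, |v ⬝ᵥ (E *ᵥ v)| ≤ c * (v ⬝ᵥ v)) :
    spec E ≤ c := by
  have hT : (Matrix.toEuclideanLin E).IsSymmetric :=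
    Matrix.isSymmetric_toEuclideanLin_iff.mpr (Matrix.isHermitian_iff_isSymm.mpr hE)
  rw [spec, ContinuousLinearMap.norm_eq_iSup_rayleighQuotient
    (T := LinearMap.toContinuousLinearMap (Matrix.toEuclideanLin E)) hT]
  refine ciSup_le fun x => ?_
  rcases eq_or_ne x 0 with rfl | hx
  · simpa using hc
  have hpos : 0 < ‖x‖ ^ 2 := by positivity
  have hnorm : ‖x‖ ^ 2 = WithLp.ofLp x ⬝ᵥ WithLp.ofLp x := by
    rw [← real_inner_self_eq_norm_sq, EuclideanSpace.inner_eq_star_dotProduct, star_trivial]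
  rw [ContinuousLinearMap.rayleighQuotient, ContinuousLinearMap.reApplyInnerSelf_apply, abs_div,
    abs_sq, div_le_iff₀ hpos, hnorm]
  simpa [EuclideanSpace.inner_eq_star_dotProduct, dotProduct_comm] using h (WithLp.ofLp x)

theorem frob_mul_le_left_of_spec_le_one {A : Matrix (Fin m) (Fin n) ℝ}
    (hA : spec A ≤ 1) (B : Matrix (Fin n) (Fin k) ℝ) : frob (A * B) ≤ frob B :=
  (frob_mul_le_spec_mul A B).trans (mul_le_of_le_one_left (frob_nonneg B) hA)

theorem frob_mul_le_right_of_spec_le_one (B : Matrix (Fin k) (Fin m) ℝ)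
    {A : Matrix (Fin m) (Fin n) ℝ} (hA : spec A ≤ 1) : frob (B * A) ≤ frob B :=
  (frob_mul_le_mul_spec B A).trans (mul_le_of_le_one_right (frob_nonneg B) hA)

end L2Operator

theorem vnorm_sq {n : ℕ} (v : Fin n → ℝ) : vnorm v ^ 2 = v ⬝ᵥ v := by
  rw [vnorm, Real.sq_sqrt (by positivity)]
  simp [dotProduct, sq]

theorem frob_vecMulVec_sq {m n : ℕ} (w : Fin m → ℝ) (v : Fin n → ℝ) :
    frob (Matrix.vecMulVec w v) ^ 2 = (w ⬝ᵥ w) * (v ⬝ᵥ v) := by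
  simp only [frob_sq, Matrix.vecMulVec_apply, dotProduct, Finset.sum_mul_sum]
  exact Finset.sum_congr rfl fun _ _ => Finset.sum_congr rfl fun _ _ => by ring

theorem trace_transpose_mul_vecMulVec {m : ℕ} (E : Matrix (Fin m) (Fin m) ℝ) (w v : Fin m → ℝ) :
    (Eᵀ * Matrix.vecMulVec w v).trace = w ⬝ᵥ (E *ᵥ v) := by
  simp only [Matrix.trace, Matrix.diag, Matrix.mul_apply, Matrix.transpose_apply,
    Matrix.vecMulVec_apply, dotProduct, Matrix.mulVec, Finset.mul_sum]
  rw [Finset.sum_comm]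
  exact Finset.sum_congr rfl fun _ _ => Finset.sum_congr rfl fun _ _ => by ring

section Sensing

variable {m n : ℕ} (Ms : Fin n → Matrix (Fin m) (Fin m) ℝ)

theorem calM_add (B C : Matrix (Fin m) (Fin m) ℝ) : calM Ms (B + C) = calM Ms B + calM Ms C := by
  funext k
  simp [calM, Matrix.mul_add, Matrix.trace_add]

theorem calM_sub (B C : Matrix (Fin m) (Fin m) ℝ) : calM Ms (B - C) = calM Ms B - calM Ms C := by
  funext k
  simp [calM, Matrix.mul_sub, Matrix.trace_sub]

theorem calM_zero : calM Ms 0 = 0 := by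
  funext k
  simp [calM]

theorem dotProduct_calM (B C : Matrix (Fin m) (Fin m) ℝ) :
    calM Ms B ⬝ᵥ calM Ms C = ((calMadj Ms (calM Ms B))ᵀ * C).trace := by
  simp [calMadj, calM, dotProduct, Matrix.transpose_sum, Finset.sum_mul, Matrix.trace_sum,
    Matrix.trace_smul]

theorem calMadj_isSymm (hMs : ∀ i, (Ms i).IsSymm) (y : Fin n → ℝ) : (calMadj Ms y).IsSymm := by
  simp [calMadj, Matrix.IsSymm, Matrix.transpose_sum, fun i => (hMs i).eq]

theorem calE_isSymm (hMs : ∀ i, (Ms i).IsSymm) {B : Matrix (Fin m) (Fin m) ℝ} (hB : B.IsSymm) :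
    (calE Ms B).IsSymm :=
  (calMadj_isSymm Ms hMs _).sub hB

variable {Ms} {s : ℕ} {δ : ℝ}

theorem IsRIP.abs_dotProduct_calM_sub_trace_le (hRIP : IsRIP Ms s δ)
    {B C : Matrix (Fin m) (Fin m) ℝ} (hB : B.IsSymm) (hC : C.IsSymm)
    (hrank : B.rank + C.rank ≤ s) :
    |calM Ms B ⬝ᵥ calM Ms C - (Bᵀ * C).trace| ≤ δ / 2 * (frob B ^ 2 + frob C ^ 2) := by
  obtain ⟨hlo₁, hhi₁⟩ := hRIP (B + C) (hB.add hC) ((Matrix.rank_add_le B C).trans hrank)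
  obtain ⟨hlo₂, hhi₂⟩ := hRIP (B - C) (hB.sub hC) ((Matrix.rank_sub_le B C).trans hrank)
  have hCB : (Cᵀ * B).trace = (Bᵀ * C).trace := by
    rw [← Matrix.trace_transpose, Matrix.transpose_mul, Matrix.transpose_transpose]
  have hM : vnorm (calM Ms (B + C)) ^ 2 - vnorm (calM Ms (B - C)) ^ 2 =
      4 * (calM Ms B ⬝ᵥ calM Ms C) := by
    rw [vnorm_sq, vnorm_sq, calM_add, calM_sub]
    simp only [add_dotProduct, dotProduct_add, sub_dotProduct, dotProduct_sub,
      dotProduct_comm (calM Ms C)]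
    ring
  have hF : frob (B + C) ^ 2 - frob (B - C) ^ 2 = 4 * (Bᵀ * C).trace := by
    simp only [frob_sq_eq_trace, Matrix.transpose_add, Matrix.transpose_sub, Matrix.add_mul,
      Matrix.mul_add, Matrix.sub_mul, Matrix.mul_sub, Matrix.trace_add, Matrix.trace_sub, hCB]
    ring
  have hF' : frob (B + C) ^ 2 + frob (B - C) ^ 2 = 2 * (frob B ^ 2 + frob C ^ 2) := by
    simp only [frob_sq_eq_trace, Matrix.transpose_add, Matrix.transpose_sub, Matrix.add_mul,
      Matrix.mul_add, Matrix.sub_mul, Matrix.mul_sub, Matrix.trace_add, Matrix.trace_sub, hCB]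
    ring
  rw [show δ / 2 * (frob B ^ 2 + frob C ^ 2) = δ / 4 * (frob (B + C) ^ 2 + frob (B - C) ^ 2) by
    rw [hF']; ring, abs_le]
  constructor <;> linarith

theorem IsRIP.abs_dotProduct_calE_mulVec_le (hRIP : IsRIP Ms s δ)
    {D : Matrix (Fin m) (Fin m) ℝ} (hD : D.IsSymm) (hrank : D.rank + 1 ≤ s) (v : Fin m → ℝ) :
    |v ⬝ᵥ (calE Ms D *ᵥ v)| ≤ δ * frob D * (v ⬝ᵥ v) := by
  rcases eq_or_ne D 0 with rfl | hD0
  · simp [calE, calM_zero, calMadj, frob]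
  rcases eq_or_ne v 0 with rfl | hv0
  · simp
  have hfD : 0 < frob D := (frob_nonneg D).lt_of_ne' (frob_eq_zero.not.mpr hD0)
  have hvv : 0 < v ⬝ᵥ v := (Finset.sum_nonneg fun i _ => mul_self_nonneg (v i)).lt_of_ne'
    (dotProduct_self_eq_zero.not.mpr hv0)
  -- the rank-one test matrix `C = c v vᵀ`, scaled so that `‖C‖_F = ‖D‖_F`
  set c := frob D / (v ⬝ᵥ v) with hc
  have hc0 : 0 < c := div_pos hfD hvv
  set C := Matrix.vecMulVec (c • v) v
  have hC : C.IsSymm := by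
    simp [C, Matrix.IsSymm, Matrix.transpose_vecMulVec, Matrix.smul_vecMulVec]
  have hfC : frob C ^ 2 = frob D ^ 2 := by
    rw [frob_vecMulVec_sq, smul_dotProduct, dotProduct_smul, smul_eq_mul, smul_eq_mul, hc]
    field_simp
  have hdefect : calM Ms D ⬝ᵥ calM Ms C - (Dᵀ * C).trace = c * (v ⬝ᵥ (calE Ms D *ᵥ v)) := by
    rw [dotProduct_calM, ← Matrix.trace_sub, ← Matrix.sub_mul, ← Matrix.transpose_sub,
      trace_transpose_mul_vecMulVec, smul_dotProduct, smul_eq_mul]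
    rfl
  have key := hRIP.abs_dotProduct_calM_sub_trace_le hD hC
    (by have : C.rank ≤ 1 := Matrix.rank_vecMulVec_le (c • v) v; omega)
  rw [hdefect, abs_mul, abs_of_pos hc0, hfC, hc, div_mul_eq_mul_div, div_le_iff₀ hvv] at key
  refine le_of_mul_le_mul_left ?_ hfD
  linarith

theorem IsRIP.spec_calE_le (hRIP : IsRIP Ms s δ) (hMs : ∀ i, (Ms i).IsSymm) (hδ : 0 ≤ δ)
    {D : Matrix (Fin m) (Fin m) ℝ} (hD : D.IsSymm) (hrank : D.rank + 1 ≤ s) :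
    spec (calE Ms D) ≤ δ * frob D :=
  spec_le_of_abs_dotProduct_mulVec_le (calE_isSymm Ms hMs hD) (mul_nonneg hδ (frob_nonneg D))
    (hRIP.abs_dotProduct_calE_mulVec_le hD hrank)

theorem IsRIP.frob_calE_le (hRIP : IsRIP Ms s δ) (hMs : ∀ i, (Ms i).IsSymm) (hδ : 0 ≤ δ)
    {D : Matrix (Fin m) (Fin m) ℝ} (hD : D.IsSymm) (hrank : D.rank + 1 ≤ s) :
    frob (calE Ms D) ≤ δ * m * spec D :=
  calc frob (calE Ms D) ≤ spec (calE Ms D) * √m := frob_le_spec_mul_sqrt _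
    _ ≤ δ * frob D * √m := by gcongr; exact hRIP.spec_calE_le hMs hδ hD hrank
    _ ≤ δ * (spec D * √m) * √m := by gcongr; exact frob_le_spec_mul_sqrt D
    _ = δ * m * spec D := by
      rw [mul_assoc, mul_assoc, Real.mul_self_sqrt (Nat.cast_nonneg m)]
      ring

end Sensing

section RiemannianGradient

variable {m r : ℕ}

theorem Rgrad_sub (X g₁ g₂ : Matrix (Fin m) (Fin r) ℝ) :
    Rgrad X g₁ - Rgrad X g₂ = Rgrad X (g₁ - g₂) := by
  simp only [Rgrad, Matrix.transpose_sub, Matrix.mul_sub, Matrix.sub_mul, smul_sub]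
  abel

variable {X : Matrix (Fin m) (Fin r) ℝ}

theorem Stiefel.frob_Rgrad_le (hX : Stiefel X) (g : Matrix (Fin m) (Fin r) ℝ) :
    frob (Rgrad X g) ≤ 2 * frob g := by
  have hXg : frob (Xᵀ * g) ≤ frob g := frob_mul_le_left_of_spec_le_one hX.spec_transpose_le_one g
  have hgX : frob (gᵀ * X) = frob (Xᵀ * g) := by
    rw [← frob_transpose, Matrix.transpose_mul, Matrix.transpose_transpose]
  calc frob (Rgrad X g)
      ≤ frob ((1 - X * Xᵀ) * g) + 2⁻¹ * frob (X * (Xᵀ * g - gᵀ * X)) := by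
        refine (frob_add_le _ _).trans_eq ?_
        rw [frob_smul, abs_of_pos (by norm_num)]
    _ ≤ frob g + 2⁻¹ * (frob (Xᵀ * g) + frob (gᵀ * X)) := by
        gcongr
        · exact frob_mul_le_left_of_spec_le_one hX.spec_one_sub_mul_transpose_le_one g
        · exact (frob_mul_le_left_of_spec_le_one hX.spec_le_one _).trans (frob_sub_le _ _)
    _ ≤ 2 * frob g := by linarith

theorem Stiefel.frob_Rgrad_sub_le (hX : Stiefel X) (B C : Matrix (Fin m) (Fin m) ℝ)
    (Θ : Matrix (Fin r) (Fin r) ℝ) :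
    frob (Rgrad X (B * X * Θ) - Rgrad X (C * X * Θ)) ≤ 2 * (frob (B - C) * spec Θ) := by
  rw [Rgrad_sub, ← Matrix.sub_mul, ← Matrix.sub_mul]
  refine (hX.frob_Rgrad_le _).trans (mul_le_mul_of_nonneg_left ?_ zero_le_two)
  exact (frob_mul_le_mul_spec _ Θ).trans
    (by gcongr; exacts [spec_nonneg Θ, frob_mul_le_right_of_spec_le_one _ hX.spec_le_one])

theorem Stiefel.frob_smul_transpose_mul_mul_sub_le (hX : Stiefel X) (c : ℝ)
    (B C : Matrix (Fin m) (Fin m) ℝ) :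
    frob (c • (Xᵀ * B * X) - c • (Xᵀ * C * X)) ≤ |c| * frob (B - C) := by
  rw [← smul_sub, frob_smul, ← Matrix.sub_mul, ← Matrix.mul_sub]
  gcongr
  exact (frob_mul_le_right_of_spec_le_one _ hX.spec_le_one).trans
    (frob_mul_le_left_of_spec_le_one hX.spec_transpose_le_one _)

end RiemannianGradient

noncomputable section

theorem stmt10_general {m r r_A n : ℕ}
    (A : Matrix (Fin m) (Fin m) ℝ) (hAsym : A.IsSymm) (hArank : A.rank ≤ r_A)
    (hAnorm : spec A ≤ 1)
    (Ms : Fin n → Matrix (Fin m) (Fin m) ℝ) (hMs : ∀ i, (Ms i).IsSymm)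
    (δ : ℝ) (hδ0 : 0 ≤ δ) (hRIP : IsRIP Ms (r + r_A + 1) δ)
    (X : Matrix (Fin m) (Fin r) ℝ) (hX : Stiefel X)
    (Θ : Matrix (Fin r) (Fin r) ℝ) (hΘsym : Θ.IsSymm) (hΘ : spec Θ ≤ 2) :
    frob (Rgrad X ((X * Θ * Xᵀ - A) * X * Θ) -
        Rgrad X (calMadj Ms (calM Ms (X * Θ * Xᵀ - A)) * X * Θ)) ≤ 12 * (m : ℝ) * δ ∧
    frob ((2⁻¹ : ℝ) • (Xᵀ * (X * Θ * Xᵀ - A) * X) -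
        (2⁻¹ : ℝ) • (Xᵀ * calMadj Ms (calM Ms (X * Θ * Xᵀ - A)) * X)) ≤
      (3 / 2) * (m : ℝ) * δ := by
  have hDsym : (X * Θ * Xᵀ - A).IsSymm := by
    refine Matrix.IsSymm.sub ?_ hAsym
    simp [Matrix.IsSymm, Matrix.transpose_mul, hΘsym.eq, Matrix.mul_assoc]
  have hDrank : (X * Θ * Xᵀ - A).rank + 1 ≤ r + r_A + 1 := by
    have hXΘX : (X * Θ * Xᵀ).rank ≤ r :=
      ((Matrix.rank_mul_le_left _ _).trans (Matrix.rank_mul_le_left _ _)).trans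
        (Matrix.rank_le_width X)
    have := Matrix.rank_sub_le (X * Θ * Xᵀ) A
    omega
  have hDspec : spec (X * Θ * Xᵀ - A) ≤ 3 :=
    calc spec (X * Θ * Xᵀ - A) ≤ spec X * spec Θ * spec Xᵀ + spec A :=
          (spec_sub_le _ _).trans (by grw [spec_mul_le, spec_mul_le]; exact spec_nonneg _)
      _ ≤ 1 * 2 * 1 + 1 := by
          grw [hX.spec_le_one, hΘ, hX.spec_transpose_le_one, hAnorm] <;> exact spec_nonneg _
      _ = 3 := by norm_num
  have hE : frob (X * Θ * Xᵀ - A - calMadj Ms (calM Ms (X * Θ * Xᵀ - A))) ≤ 3 * m * δ := by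
    rw [← frob_neg, neg_sub]
    calc _ ≤ δ * m * spec (X * Θ * Xᵀ - A) := hRIP.frob_calE_le hMs hδ0 hDsym hDrank
      _ ≤ δ * m * 3 := by gcongr
      _ = 3 * m * δ := by ring
  constructor
  · calc _ ≤ 2 * (3 * m * δ * 2) := by grw [hX.frob_Rgrad_sub_le, hE, hΘ]; exact spec_nonneg _
      _ = 12 * m * δ := by ring
  · calc _ ≤ |(2⁻¹ : ℝ)| * (3 * m * δ) := by grw [hX.frob_smul_transpose_mul_mul_sub_le, hE]
      _ = 3 / 2 * m * δ := by rw [abs_of_pos (by norm_num)]; ring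

theorem stmt10 {m r r_A n : ℕ}
    (A : Matrix (Fin m) (Fin m) ℝ) (hAsym : A.IsSymm) (hArank : A.rank ≤ r_A)
    (hAnorm : spec A ≤ 1)
    (Ms : Fin n → Matrix (Fin m) (Fin m) ℝ) (hMs : ∀ i, (Ms i).IsSymm)
    (δ : ℝ) (hδ0 : 0 ≤ δ) (hδ1 : δ < 1) (hRIP : IsRIP Ms (r + r_A + 1) δ)
    (X : Matrix (Fin m) (Fin r) ℝ) (hX : Stiefel X)
    (Θ : Matrix (Fin r) (Fin r) ℝ) (hΘsym : Θ.IsSymm) (hΘ : spec Θ ≤ 2) :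
    frob (Rgrad X ((X * Θ * Xᵀ - A) * X * Θ) -
        Rgrad X (calMadj Ms (calM Ms (X * Θ * Xᵀ - A)) * X * Θ)) ≤ 12 * (m : ℝ) * δ ∧
    frob ((2⁻¹ : ℝ) • (Xᵀ * (X * Θ * Xᵀ - A) * X) -
        (2⁻¹ : ℝ) • (Xᵀ * calMadj Ms (calM Ms (X * Θ * Xᵀ - A)) * X)) ≤
      (3 / 2) * (m : ℝ) * δ :=
  stmt10_general A hAsym hArank hAnorm Ms hMs δ hδ0 hRIP X hX Θ hΘsym hΘ

end
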